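/- arXiv:2405.07476 — 4 statements merged into one kernel-verified Lean document; each statement's English description precedes it below -/
import Mathlib

section
/- Let X be a metric space, f : X → ℝ² a map, and ν a Borel measure on X. Let W ⊂ X be a compact set such that ν(W) = 0, ν(N_{δ₀}(W)) < ∞ for some δ₀ > 0, and m₂(f(B̄(x,r))) ≤ ν(B̄(x,r)) for every x ∈ W and every 0 < r < δ₀. Then H²({x ∈ W : J_f(x) > 0}) = 0 (H² applied as an outer measure); in particular J_f(x) = 0 for H²-almost every x ∈ W. -/
open MeasureTheory Metric Set Filter
open scoped ENNReal NNReal Topology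

/-- The generalized Jacobian `J_f(x) = limsup_{r→0+} m₂(f(B̄(x,r)))/(π r²)`, where `m₂` is
the 2-dimensional Lebesgue (outer) measure on `ℝ²` and `B̄(x,r)` is the closed ball. -/
noncomputable def jacobianJ {X : Type*} [MetricSpace X]
    (f : X → EuclideanSpace ℝ (Fin 2)) (x : X) : ℝ≥0∞ :=
  Filter.limsup
    (fun r : ℝ => volume (f '' Metric.closedBall x r) / ENNReal.ofReal (Real.pi * r ^ 2))
    (𝓝[>] (0 : ℝ))

/-!
Fix `ε > 0` and let `S = {x ∈ W | ε < J_f(x)}`. Every `x ∈ S` is the centre of arbitrarily small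
balls with `ν(B̄(x,r)) ≥ m₂(f(B̄(x,r))) > επr²`. A Vitali subfamily of such balls of radii `< δ`
is disjoint and contained in `N_δ(W)`, and its 4-fold enlargements cover `S`; hence
`H²_{8δ}(S) ≤ 64 ν(N_δ(W)) / (επ)`, which tends to `64 ν(W) / (επ) = 0` as `δ → 0`.
-/

section DensityBound

variable {X : Type*} [PseudoMetricSpace X]

theorem ediam_closedBall_le_ofReal (x : X) (r : ℝ) :
    ediam (closedBall x r) ≤ ENNReal.ofReal (2 * r) :=
  ediam_le_of_forall_dist_le fun _ hy _ hz =>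
    (dist_triangle_right _ _ x).trans (by linarith [mem_closedBall.1 hy, mem_closedBall.1 hz])

theorem iUnion_closedBall_subset_cthickening {S u : Set X} {ρ : X → ℝ} {η : ℝ} (huS : u ⊆ S)
    (hρη : ∀ b ∈ u, ρ b ≤ η) :
    ⋃ b : u, closedBall (b : X) (ρ b) ⊆ cthickening η S :=
  iUnion_subset fun b _ hy =>
    mem_cthickening_of_dist_le _ (b : X) η S (huS b.2) ((mem_closedBall.1 hy).trans (hρη b b.2))

variable [MeasurableSpace X] [OpensMeasurableSpace X] {ν : Measure X} {S : Set X}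

theorem Set.PairwiseDisjoint.countable_of_measure_closedBall_pos {u : Set X} {ρ : X → ℝ}
    (hdisj : u.PairwiseDisjoint fun b => closedBall b (ρ b))
    (hpos : ∀ b ∈ u, 0 < ν (closedBall b (ρ b)))
    (hfin : ν (⋃ b : u, closedBall (b : X) (ρ b)) ≠ ∞) :
    u.Countable := by
  have h := Measure.countable_meas_pos_of_disjoint_of_meas_iUnion_ne_top ν
    (fun _ => measurableSet_closedBall) hdisj.subtype hfin
  have hall : {b : u | 0 < ν (closedBall (b : X) (ρ b))} = univ :=
    eq_univ_of_forall fun b => hpos b b.2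
  rwa [hall, countable_univ_iff, countable_coe_iff] at h

variable {d : ℝ} {c : ℝ≥0}

theorem exists_closedBall_cover_tsum_ediam_rpow_le (hd : 0 ≤ d) (hc : c ≠ 0)
    (hS : ∀ x ∈ S, ∃ᶠ r in 𝓝[>] 0, c * ENNReal.ofReal r ^ d < ν (closedBall x r))
    {η : ℝ} (hη : 0 < η) (hfin : ν (cthickening η S) ≠ ∞) :
    ∃ u : Set X, ∃ ρ : X → ℝ, u.Countable ∧
      (∀ b ∈ u, ediam (closedBall b (4 * ρ b)) ≤ ENNReal.ofReal (8 * η)) ∧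
      S ⊆ ⋃ b : u, closedBall (b : X) (4 * ρ b) ∧
      ∑' b : u, ediam (closedBall (b : X) (4 * ρ b)) ^ d ≤ 8 ^ d * ν (cthickening η S) / c := by
  have hradius : ∀ x ∈ S, ∃ r, r ∈ Ioo 0 η ∧ c * ENNReal.ofReal r ^ d < ν (closedBall x r) :=
    fun x hx => ((hS x hx).and_eventually (Ioo_mem_nhdsGT hη)).exists.imp fun _ hr => ⟨hr.2, hr.1⟩
  choose! ρ hρη hρν using hradius
  obtain ⟨u, huS, hdisj, hcover⟩ :=
    Vitali.exists_disjoint_subfamily_covering_enlargement_closedBall S id ρ η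
      (fun x hx => (hρη x hx).2.le) 4 (by norm_num)
  have hsub : ⋃ b : u, closedBall (b : X) (ρ b) ⊆ cthickening η S :=
    iUnion_closedBall_subset_cthickening huS fun b hb => (hρη b (huS hb)).2.le
  have hdiam : ∀ b, ediam (closedBall b (4 * ρ b)) ≤ ENNReal.ofReal (8 * ρ b) := fun b =>
    (ediam_closedBall_le_ofReal b _).trans_eq (by ring_nf)
  refine ⟨u, ρ, ?_, fun b hb => (hdiam b).trans ?_, fun x hx => ?_, ?_⟩
  · exact hdisj.countable_of_measure_closedBall_pos
      (fun b hb => zero_le.trans_lt (hρν b (huS hb)))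
      (ne_top_of_le_ne_top hfin (measure_mono hsub))
  · exact ENNReal.ofReal_le_ofReal (by linarith [(hρη b (huS hb)).2])
  · obtain ⟨b, hb, hball⟩ := hcover x hx
    exact mem_iUnion.2 ⟨⟨b, hb⟩, hball (mem_closedBall_self (hρη x hx).1.le)⟩
  have hpacking : (∑' b : u, ENNReal.ofReal (ρ b) ^ d) * c ≤ ν (cthickening η S) :=
    calc (∑' b : u, ENNReal.ofReal (ρ b) ^ d) * c
        = ∑' b : u, c * ENNReal.ofReal (ρ b) ^ d := by
          rw [← ENNReal.tsum_mul_right]; simp only [mul_comm]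
      _ ≤ ∑' b : u, ν (closedBall (b : X) (ρ b)) :=
          ENNReal.tsum_le_tsum fun b => (hρν b (huS b.2)).le
      _ ≤ ν (⋃ b : u, closedBall (b : X) (ρ b)) :=
          tsum_meas_le_meas_iUnion_of_disjoint ν (fun _ => measurableSet_closedBall) hdisj.subtype
      _ ≤ ν (cthickening η S) := measure_mono hsub
  calc ∑' b : u, ediam (closedBall (b : X) (4 * ρ b)) ^ d
      ≤ ∑' b : u, 8 ^ d * ENNReal.ofReal (ρ b) ^ d := by
        refine ENNReal.tsum_le_tsum fun b => (ENNReal.rpow_le_rpow (hdiam b) hd).trans_eq ?_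
        rw [ENNReal.ofReal_mul (by norm_num), ENNReal.mul_rpow_of_nonneg _ _ hd,
          ENNReal.ofReal_ofNat]
    _ = 8 ^ d * ∑' b : u, ENNReal.ofReal (ρ b) ^ d := ENNReal.tsum_mul_left
    _ ≤ 8 ^ d * ν (cthickening η S) / c := by
        rw [mul_div_assoc]
        gcongr
        exact (ENNReal.le_div_iff_mul_le (Or.inl (by exact_mod_cast hc)) (Or.inr hfin)).2 hpacking

end DensityBound

theorem hausdorffMeasure_le_of_frequently_lt_measure_closedBall {X : Type*} [MetricSpace X]
    [MeasurableSpace X] [BorelSpace X] {ν : Measure X} {S : Set X} {d : ℝ} {c : ℝ≥0}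
    (hd : 0 ≤ d) (hc : c ≠ 0)
    (hS : ∀ x ∈ S, ∃ᶠ r in 𝓝[>] 0, c * ENNReal.ofReal r ^ d < ν (closedBall x r))
    {δ : ℝ} (hδ : 0 < δ) :
    μH[d] S ≤ 8 ^ d * ν (cthickening δ S) / c := by
  rcases eq_or_ne (ν (cthickening δ S)) ∞ with htop | hfin
  · simp [htop, ENNReal.mul_top]
  obtain ⟨η, -, hη, hη0⟩ := exists_seq_strictAnti_tendsto' hδ
  have hscale := fun n => exists_closedBall_cover_tsum_ediam_rpow_le hd hc hS (hη n).1
    (ne_top_of_le_ne_top hfin (measure_mono (cthickening_mono (hη n).2.le S)))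
  choose u ρ hcount hdiam hcover hsum using hscale
  have := fun n => (hcount n).to_subtype
  calc μH[d] S ≤ liminf (fun n => ∑' b : u n, ediam (closedBall (b : X) (4 * ρ n b)) ^ d) atTop :=
        Measure.hausdorffMeasure_le_liminf_tsum d S (fun n => ENNReal.ofReal (8 * η n))
          (by simpa using ENNReal.tendsto_ofReal (hη0.const_mul 8)) _
          (Eventually.of_forall fun n b => hdiam n b b.2) (Eventually.of_forall hcover)
    _ ≤ 8 ^ d * ν (cthickening δ S) / c :=
        liminf_le_of_frequently_le' <| Frequently.of_forall fun n =>
          (hsum n).trans (by gcongr; exact cthickening_mono (hη n).2.le S)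

theorem frequently_lt_volume_image_closedBall_of_lt_jacobianJ {X : Type*} [MetricSpace X]
    {f : X → EuclideanSpace ℝ (Fin 2)} {x : X} {ε : ℝ≥0∞} (hx : ε < jacobianJ f x) :
    ∃ᶠ r in 𝓝[>] 0, ε * ENNReal.ofReal (Real.pi * r ^ 2) < volume (f '' closedBall x r) := by
  refine (frequently_lt_of_lt_limsup (by isBoundedDefault) hx).mp ?_
  filter_upwards [self_mem_nhdsWithin] with r (hr : 0 < r) hlt
  rwa [ENNReal.lt_div_iff_mul_lt (Or.inl (by positivity)) (Or.inl ENNReal.ofReal_ne_top)] at hlt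

theorem hausdorffMeasure_setOf_lt_jacobianJ_eq_zero {X : Type*} [MetricSpace X]
    [MeasurableSpace X] [BorelSpace X] {f : X → EuclideanSpace ℝ (Fin 2)}
    {ν : Measure X} {W : Set X} (hW : IsClosed W) (hν0 : ν W = 0) {δ₀ : ℝ} (hδ₀ : 0 < δ₀)
    (hνfin : ν (cthickening δ₀ W) ≠ ∞)
    (hbound : ∀ x ∈ W, ∀ r : ℝ, 0 < r → r < δ₀ →
      volume (f '' closedBall x r) ≤ ν (closedBall x r))
    {ε : ℝ≥0} (hε : ε ≠ 0) :
    μH[2] {x ∈ W | ε < jacobianJ f x} = 0 := by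
  set c : ℝ≥0 := ε * Real.toNNReal Real.pi
  have hc : c ≠ 0 := mul_ne_zero hε (by simpa using Real.pi_pos)
  have hS : ∀ x ∈ {x ∈ W | ε < jacobianJ f x}, ∃ᶠ r in 𝓝[>] 0,
      c * ENNReal.ofReal r ^ (2 : ℝ) < ν (closedBall x r) := by
    rintro x ⟨hxW, hxJ⟩
    refine (frequently_lt_volume_image_closedBall_of_lt_jacobianJ hxJ).mp ?_
    filter_upwards [Ioo_mem_nhdsGT hδ₀] with r hr hlt
    calc c * ENNReal.ofReal r ^ (2 : ℝ) = ε * ENNReal.ofReal (Real.pi * r ^ 2) := by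
          rw [ENNReal.rpow_two, ← ENNReal.ofReal_pow hr.1.le, ENNReal.ofReal_mul Real.pi_pos.le,
            ENNReal.coe_mul, mul_assoc]
          rfl
      _ < volume (f '' closedBall x r) := hlt
      _ ≤ ν (closedBall x r) := hbound x hxW r hr.1 hr.2
  have hlim : Tendsto (fun δ => 8 ^ (2 : ℝ) * ν (cthickening δ W) / c) (𝓝[>] 0) (𝓝 0) := by
    have h : Tendsto (fun δ => ν (cthickening δ W)) (𝓝[>] 0) (𝓝 (ν W)) :=
      (tendsto_measure_cthickening_of_isClosed ⟨δ₀, hδ₀, hνfin⟩ hW).mono_left nhdsWithin_le_nhds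
    rw [hν0] at h
    simpa using ENNReal.Tendsto.div_const (ENNReal.Tendsto.const_mul (a := 8 ^ (2 : ℝ)) h
      (Or.inr (by simp))) (Or.inr (by exact_mod_cast hc))
  refine le_antisymm (ge_of_tendsto hlim ?_) zero_le
  filter_upwards [self_mem_nhdsWithin] with δ (hδ : 0 < δ)
  refine (hausdorffMeasure_le_of_frequently_lt_measure_closedBall zero_le_two hc hS hδ).trans ?_
  gcongr 8 ^ (2 : ℝ) * ν ?_ / _
  exact cthickening_subset_of_subset δ fun x hx => hx.1

/-- If `W` is compact, `ν W = 0`, `ν` is finite on a closed `δ₀`-neighborhood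
of `W`, and `m₂(f(B̄(x,r))) ≤ ν(B̄(x,r))` for all `x ∈ W` and `0 < r < δ₀`, then
`J_f = 0` at `H²`-almost every point of `W`. -/
theorem jacobian_vanishes_on_null_set
    {X : Type*} [MetricSpace X] [MeasurableSpace X] [BorelSpace X]
    (f : X → EuclideanSpace ℝ (Fin 2)) (ν : Measure X)
    (W : Set X) (hW : IsCompact W) (hν0 : ν W = 0)
    (δ₀ : ℝ) (hδ₀ : 0 < δ₀) (hνfin : ν (cthickening δ₀ W) < ∞)
    (hbound : ∀ x ∈ W, ∀ r : ℝ, 0 < r → r < δ₀ →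
      volume (f '' closedBall x r) ≤ ν (closedBall x r)) :
    μH[2] {x ∈ W | 0 < jacobianJ f x} = 0 := by
  have hcover : {x ∈ W | 0 < jacobianJ f x} ⊆
      ⋃ n : ℕ, {x ∈ W | ((n + 1 : ℝ≥0)⁻¹ : ℝ≥0) < jacobianJ f x} := by
    rintro x ⟨hxW, hxJ⟩
    obtain ⟨n, hn⟩ := ENNReal.exists_inv_nat_lt hxJ.ne'
    refine mem_iUnion.2 ⟨n, hxW, lt_of_le_of_lt ?_ hn⟩
    rw [ENNReal.coe_inv (by positivity)]
    push_cast
    exact ENNReal.inv_le_inv.2 le_self_add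
  exact measure_mono_null hcover <| measure_iUnion_null fun n =>
    hausdorffMeasure_setOf_lt_jacobianJ_eq_zero hW.isClosed hν0 hδ₀ hνfin.ne hbound
      (by positivity)
end

section
/- Let X be a metric surface and f : X → ℝ² a continuous map. Fix t ∈ (1,2), k ∈ ℤ, and a compact set A ⊂ X such that every x ∈ A is an H²-density point and t^{k−1} ≤ J_f(x) ≤ t^k. Then for every δ > 0, ∫_A J_f dH² ≤ t(1+δ) ∫_{ℝ²} N(y, f, N_δ(A)) dy, where the integral on the right is with respect to 2-dimensional Lebesgue measure. -/
open MeasureTheory Metric Set Filter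
open scoped ENNReal NNReal Topology

/-- The multN function `N(y, f, A)`: the number of preimages of `y` under `f`
lying in `A`, as an extended nonnegative real. -/
noncomputable def multN {X : Type*}
    (f : X → EuclideanSpace ℝ (Fin 2)) (A : Set X) (y : EuclideanSpace ℝ (Fin 2)) : ℝ≥0∞ :=
  ({x ∈ A | f x = y}).encard

/-- `x` is an `H²`-density point of the metric space `X`:
`H²(B̄(x,r))/(π r²) → 1` as `r → 0+`. -/
def IsH2DensityPoint {X : Type*} [MetricSpace X] [MeasurableSpace X] [BorelSpace X] (x : X) : Prop :=
  Filter.Tendsto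
    (fun r : ℝ => μH[2] (Metric.closedBall x r) / ENNReal.ofReal (Real.pi * r ^ 2))
    (𝓝[>] (0 : ℝ)) (𝓝 1)

/-! The Vitali covering theorem covers `A`, up to an `H²`-null set, by disjoint closed balls
`B̄(x, r)` with `x ∈ A` and `r ≤ δ`: at a density point `H²` is doubling at small scales, and
since `J_f(x) ≥ t^(k-1)`, at arbitrarily small scales
`H²(B̄(x, r)) ≤ √(1+δ) π r²` and `m₂(f(B̄(x, r))) ≥ t^(k-1) π r² / √(1+δ)`.
Hence `t^(k-1) H²(A) ≤ (1+δ) ∑ m₂(f(Bᵢ))`, and as the balls are disjoint and lie in `N_δ(A)`,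
`∑ 𝟙_{f(Bᵢ)} ≤ N(·, f, N_δ(A))`. Combine with `∫_A J_f ≤ t^k H²(A)`. -/

open Function

theorem IsClosed.measurableSet_image_of_continuous {X Y : Type*} [TopologicalSpace X]
    [SigmaCompactSpace X] [TopologicalSpace Y] [T2Space Y] [MeasurableSpace Y]
    [OpensMeasurableSpace Y] {f : X → Y} (hf : Continuous f) {s : Set X} (hs : IsClosed s) :
    MeasurableSet (f '' s) := by
  obtain ⟨K, hK, hKs⟩ := (isSigmaCompact_univ.of_isClosed_subset hs (subset_univ s)).image hf
  exact hKs ▸ MeasurableSet.iUnion fun n => (hK n).measurableSet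

section Multiplicity

variable {X ι : Type*} {f : X → EuclideanSpace ℝ (Fin 2)} {B : ι → Set X} {T : Set X}

theorem encard_setOf_mem_image_le_multN (hB : Pairwise (Disjoint on B)) (hBT : ∀ i, B i ⊆ T)
    (y : EuclideanSpace ℝ (Fin 2)) :
    {i | y ∈ f '' B i}.encard ≤ {x ∈ T | f x = y}.encard := by
  rcases isEmpty_or_nonempty X with _ | _
  · simp [Set.image_eq_empty.2 (Subsingleton.elim (B _) ∅)]
  choose! g hgB hgy using fun i (hi : y ∈ f '' B i) => hi
  refine encard_le_encard_of_injOn (fun i hi => ⟨hBT i (hgB i hi), hgy i hi⟩) ?_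
  intro i hi j hj hij
  by_contra hne
  exact Set.disjoint_left.1 (hB hne) (hgB i hi) (hij ▸ hgB j hj)

theorem tsum_indicator_image_le_multN (hB : Pairwise (Disjoint on B)) (hBT : ∀ i, B i ⊆ T)
    (y : EuclideanSpace ℝ (Fin 2)) :
    ∑' i, (f '' B i).indicator 1 y ≤ multN f T y := by
  have hsum : ∑' i, (f '' B i).indicator (1 : EuclideanSpace ℝ (Fin 2) → ℝ≥0∞) y =
      {i | y ∈ f '' B i}.encard := by
    rw [← ENNReal.tsum_set_one, tsum_subtype _ fun _ => 1]
    rfl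
  rw [hsum, multN]
  exact_mod_cast encard_setOf_mem_image_le_multN hB hBT y

theorem tsum_measure_image_le_lintegral_multN [Countable ι]
    (ν : Measure (EuclideanSpace ℝ (Fin 2))) (hB : Pairwise (Disjoint on B))
    (hBT : ∀ i, B i ⊆ T) (hfB : ∀ i, MeasurableSet (f '' B i)) :
    ∑' i, ν (f '' B i) ≤ ∫⁻ y, multN f T y ∂ν :=
  calc ∑' i, ν (f '' B i) = ∑' i, ∫⁻ y, (f '' B i).indicator 1 y ∂ν := by
        simp only [lintegral_indicator_one (hfB _)]
    _ = ∫⁻ y, ∑' i, (f '' B i).indicator 1 y ∂ν :=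
        (lintegral_tsum fun i => (measurable_one.indicator (hfB i)).aemeasurable).symm
    _ ≤ ∫⁻ y, multN f T y ∂ν := lintegral_mono (tsum_indicator_image_le_multN hB hBT)

end Multiplicity

theorem ofReal_pi_mul_sq_ne_zero {r : ℝ} (hr : 0 < r) : ENNReal.ofReal (Real.pi * r ^ 2) ≠ 0 :=
  ENNReal.ofReal_pos.2 (by positivity) |>.ne'

section Density

variable {X : Type*} [MetricSpace X] [MeasurableSpace X] [BorelSpace X] {x : X}

theorem IsH2DensityPoint.eventually_measure_closedBall_le (hx : IsH2DensityPoint x)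
    {c : ℝ≥0∞} (hc : 1 < c) :
    ∀ᶠ r in 𝓝[>] 0, μH[2] (closedBall x r) ≤ c * ENNReal.ofReal (Real.pi * r ^ 2) := by
  filter_upwards [hx.eventually (gt_mem_nhds hc), self_mem_nhdsWithin] with r hr hr0
  exact (ENNReal.div_le_iff (ofReal_pi_mul_sq_ne_zero hr0) ENNReal.ofReal_ne_top).1 hr.le

theorem IsH2DensityPoint.eventually_le_measure_closedBall (hx : IsH2DensityPoint x)
    {c : ℝ≥0∞} (hc : c < 1) :
    ∀ᶠ r in 𝓝[>] 0, c * ENNReal.ofReal (Real.pi * r ^ 2) ≤ μH[2] (closedBall x r) := by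
  filter_upwards [hx.eventually (lt_mem_nhds hc), self_mem_nhdsWithin] with r hr hr0
  exact (ENNReal.le_div_iff_mul_le (.inl (ofReal_pi_mul_sq_ne_zero hr0))
    (.inl ENNReal.ofReal_ne_top)).1 hr.le

theorem IsH2DensityPoint.eventually_measure_closedBall_three_mul_le (hx : IsH2DensityPoint x) :
    ∀ᶠ r in 𝓝[>] 0, μH[2] (closedBall x (3 * r)) ≤ 36 * μH[2] (closedBall x r) := by
  filter_upwards [eventually_nhdsGT_zero_mul_left three_pos
      (hx.eventually_measure_closedBall_le ENNReal.one_lt_two),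
    hx.eventually_le_measure_closedBall ENNReal.one_half_lt_one] with r hr3 hr
  calc μH[2] (closedBall x (3 * r)) ≤ 2 * ENNReal.ofReal (Real.pi * (3 * r) ^ 2) := hr3
    _ = 36 * (2⁻¹ * ENNReal.ofReal (Real.pi * r ^ 2)) := by
      rw [show Real.pi * (3 * r) ^ 2 = 9 * (Real.pi * r ^ 2) by ring,
        ENNReal.ofReal_mul (by norm_num), ENNReal.ofReal_ofNat, ← mul_assoc, ← mul_assoc,
        show (36 : ℝ≥0∞) = 2 * 9 * 2 by norm_num, mul_assoc (2 * 9),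
        ENNReal.mul_inv_cancel two_ne_zero ENNReal.ofNat_ne_top, mul_one]
    _ ≤ 36 * μH[2] (closedBall x r) := by gcongr

end Density

theorem frequently_le_volume_image_closedBall_of_lt_jacobianJ {X : Type*} [MetricSpace X]
    {f : X → EuclideanSpace ℝ (Fin 2)} {x : X} {c : ℝ≥0∞} (hc : c < jacobianJ f x) :
    ∃ᶠ r in 𝓝[>] 0, c * ENNReal.ofReal (Real.pi * r ^ 2) ≤ volume (f '' closedBall x r) := by
  refine ((frequently_lt_of_lt_limsup (by isBoundedDefault) hc).and_eventually
    self_mem_nhdsWithin).mono fun r ⟨hr, hr0⟩ => ?_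
  exact (ENNReal.le_div_iff_mul_le (.inl (ofReal_pi_mul_sq_ne_zero hr0))
    (.inl ENNReal.ofReal_ne_top)).1 hr.le

theorem IsH2DensityPoint.frequently_doubling_and_measure_closedBall_le
    {X : Type*} [MetricSpace X] [MeasurableSpace X] [BorelSpace X] {x : X}
    (hx : IsH2DensityPoint x) {f : X → EuclideanSpace ℝ (Fin 2)} {a b : ℝ≥0∞}
    (ha : 1 < a) (hb : b < jacobianJ f x) :
    ∃ᶠ r in 𝓝[>] 0, μH[2] (closedBall x (3 * r)) ≤ 36 * μH[2] (closedBall x r) ∧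
      b * μH[2] (closedBall x r) ≤ a * volume (f '' closedBall x r) := by
  refine (frequently_le_volume_image_closedBall_of_lt_jacobianJ hb).and_eventually
    (hx.eventually_measure_closedBall_three_mul_le.and
      (hx.eventually_measure_closedBall_le ha)) |>.mono fun r ⟨hvol, hdoubling, hμ⟩ => ?_
  refine ⟨hdoubling, ?_⟩
  calc b * μH[2] (closedBall x r) ≤ b * (a * ENNReal.ofReal (Real.pi * r ^ 2)) := by gcongr
    _ = a * (b * ENNReal.ofReal (Real.pi * r ^ 2)) := mul_left_comm _ _ _
    _ ≤ a * volume (f '' closedBall x r) := by gcongr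

theorem mul_measure_le_mul_lintegral_multN_cthickening {X : Type*} [PseudoMetricSpace X]
    [MeasurableSpace X] [OpensMeasurableSpace X] [SecondCountableTopology X]
    [SigmaCompactSpace X] (μ : Measure X) [IsLocallyFiniteMeasure μ]
    (ν : Measure (EuclideanSpace ℝ (Fin 2))) {f : X → EuclideanSpace ℝ (Fin 2)}
    (hf : Continuous f) {A : Set X} (C : ℝ≥0) {a b : ℝ≥0∞}
    (hA : ∀ x ∈ A, ∃ᶠ r in 𝓝[>] 0, μ (closedBall x (3 * r)) ≤ C * μ (closedBall x r) ∧
      b * μ (closedBall x r) ≤ a * ν (f '' closedBall x r))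
    {δ : ℝ} (hδ : 0 < δ) :
    b * μ A ≤ a * ∫⁻ y, multN f (cthickening δ A) y ∂ν := by
  set 𝒯 : Set (X × ℝ) := {p | p.1 ∈ A ∧ p.2 ∈ Ioc 0 δ ∧
    μ (closedBall p.1 (3 * p.2)) ≤ C * μ (closedBall p.1 p.2) ∧
    b * μ (closedBall p.1 p.2) ≤ a * ν (f '' closedBall p.1 p.2)}
  have h𝒯 : ∀ x ∈ A, ∀ η > (0 : ℝ), ∃ p ∈ 𝒯, p.2 ≤ η ∧ p.1 = x := fun x hx η hη => by
    obtain ⟨r, ⟨hdoubling, hratio⟩, hr⟩ :=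
      ((hA x hx).and_eventually (Ioc_mem_nhdsGT (lt_min hδ hη))).exists
    exact ⟨(x, r), ⟨hx, ⟨hr.1, hr.2.trans (min_le_left _ _)⟩, hdoubling, hratio⟩,
      hr.2.trans (min_le_right _ _), rfl⟩
  obtain ⟨u, hu𝒯, hu, hudisj, hucov⟩ := Vitali.exists_disjoint_covering_ae μ A 𝒯 C
    Prod.snd Prod.fst (fun p => closedBall p.1 p.2) (fun _ _ => Subset.rfl)
    (fun _ hp => hp.2.2.1)
    (fun _ hp => ⟨_, ball_subset_interior_closedBall (mem_ball_self hp.2.1.1)⟩)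
    (fun _ _ => isClosed_closedBall) h𝒯
  have : Countable u := hu.to_subtype
  let B : u → Set X := fun p => closedBall p.1.1 p.1.2
  have hB : Pairwise (Disjoint on B) := fun p q hpq => hudisj p.2 q.2 (Subtype.coe_ne_coe.2 hpq)
  have hBA : ∀ p, B p ⊆ cthickening δ A := fun p =>
    (closedBall_subset_closedBall (hu𝒯 p.2).2.1.2).trans
      (closedBall_subset_cthickening (hu𝒯 p.2).1 δ)
  calc b * μ A ≤ b * ∑' p, μ (B p) := by
        gcongr
        calc μ A ≤ μ (⋃ p ∈ u, closedBall p.1 p.2) := measure_mono_ae (ae_le_set.2 hucov)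
          _ ≤ ∑' p : u, μ (B p) := measure_biUnion_le μ hu _
    _ = ∑' p, b * μ (B p) := ENNReal.tsum_mul_left.symm
    _ ≤ ∑' p, a * ν (f '' B p) := ENNReal.tsum_le_tsum fun p => (hu𝒯 p.2).2.2.2
    _ = a * ∑' p, ν (f '' B p) := ENNReal.tsum_mul_left
    _ ≤ a * ∫⁻ y, multN f (cthickening δ A) y ∂ν := by
        gcongr
        exact tsum_measure_image_le_lintegral_multN ν hB hBA fun p =>
          isClosed_closedBall.measurableSet_image_of_continuous hf

theorem jacobian_integral_le_multN_on_thickening_general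
    {X : Type*} [MetricSpace X] [MeasurableSpace X] [BorelSpace X]
    (hsurf : ∃ U : Set (EuclideanSpace ℝ (Fin 2)),
      IsOpen U ∧ IsConnected U ∧ Nonempty (X ≃ₜ U))
    (hloc : IsLocallyFiniteMeasure (μH[2] : Measure X))
    (f : X → EuclideanSpace ℝ (Fin 2)) (hf : Continuous f)
    (t : ℝ) (ht : t ∈ Set.Ioo (1 : ℝ) 2) (k : ℤ)
    (A : Set X)
    (hdens : ∀ x ∈ A, IsH2DensityPoint x)
    (hJ : ∀ x ∈ A, ENNReal.ofReal (t ^ (k - 1)) ≤ jacobianJ f x ∧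
      jacobianJ f x ≤ ENNReal.ofReal (t ^ k)) :
    ∀ δ : ℝ, 0 < δ →
      ∫⁻ x in A, jacobianJ f x ∂(μH[2]) ≤
        ENNReal.ofReal (t * (1 + δ)) *
          ∫⁻ y, multN f (cthickening δ A) y := by
  intro δ hδ
  obtain ⟨U, hU, -, ⟨e⟩⟩ := hsurf
  have : SecondCountableTopology X := e.secondCountableTopology
  have : LocallyCompactSpace X := e.locallyCompactSpace_iff.2 hU.locallyCompactSpace
  have ht0 : 0 < t := by linarith [ht.1]
  have hτ : 0 < t ^ (k - 1) := zpow_pos ht0 _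
  set s := √(1 + δ)
  have hs : 1 < s := Real.lt_sqrt zero_le_one |>.2 (by linarith)
  -- split the slack `1 + δ = s * s` between the density of `μH[2]` and the Jacobian
  have hcover := mul_measure_le_mul_lintegral_multN_cthickening μH[2] volume hf 36
    (a := .ofReal s) (b := .ofReal (t ^ (k - 1) / s))
    (fun x hx => (hdens x hx).frequently_doubling_and_measure_closedBall_le
      (ENNReal.one_lt_ofReal.2 hs)
      (((ENNReal.ofReal_lt_ofReal_iff hτ).2 (div_lt_self hτ hs)).trans_le (hJ x hx).1)) hδ
  calc ∫⁻ x in A, jacobianJ f x ∂μH[2] ≤ ∫⁻ _ in A, ENNReal.ofReal (t ^ k) ∂μH[2] :=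
        setLIntegral_mono measurable_const fun x hx => (hJ x hx).2
    _ = ENNReal.ofReal (t * s) * (ENNReal.ofReal (t ^ (k - 1) / s) * μH[2] A) := by
        rw [setLIntegral_const, ← mul_assoc, ← ENNReal.ofReal_mul (by positivity)]
        congr 2
        rw [mul_assoc, mul_div_cancel₀ _ (by positivity), ← zpow_one_add₀ ht0.ne',
          add_sub_cancel]
    _ ≤ ENNReal.ofReal (t * s) * (ENNReal.ofReal s * ∫⁻ y, multN f (cthickening δ A) y) :=
        mul_le_mul_right hcover _
    _ = ENNReal.ofReal (t * (1 + δ)) * ∫⁻ y, multN f (cthickening δ A) y := by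
        rw [← mul_assoc, ← ENNReal.ofReal_mul (by positivity), mul_assoc,
          Real.mul_self_sqrt (by linarith)]

/-- Key covering estimate for the area inequality: if `A` is a compact set
of `H²`-density points of a metric surface `X` on which `t^(k-1) ≤ J_f ≤ t^k`, then for
every `δ > 0` the integral of `J_f` over `A` is bounded by
`t(1+δ) ∫_{ℝ²} N(y, f, N_δ(A)) dy`. -/
theorem jacobian_integral_le_multN_on_thickening
    {X : Type*} [MetricSpace X] [MeasurableSpace X] [BorelSpace X]
    (hsurf : ∃ U : Set (EuclideanSpace ℝ (Fin 2)),
      IsOpen U ∧ IsConnected U ∧ Nonempty (X ≃ₜ U))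
    (hloc : IsLocallyFiniteMeasure (μH[2] : Measure X))
    (f : X → EuclideanSpace ℝ (Fin 2)) (hf : Continuous f)
    (t : ℝ) (ht : t ∈ Set.Ioo (1 : ℝ) 2) (k : ℤ)
    (A : Set X) (hA : IsCompact A)
    (hdens : ∀ x ∈ A, IsH2DensityPoint x)
    (hJ : ∀ x ∈ A, ENNReal.ofReal (t ^ (k - 1)) ≤ jacobianJ f x ∧
      jacobianJ f x ≤ ENNReal.ofReal (t ^ k)) :
    ∀ δ : ℝ, 0 < δ →
      ∫⁻ x in A, jacobianJ f x ∂(μH[2]) ≤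
        ENNReal.ofReal (t * (1 + δ)) *
          ∫⁻ y, multN f (cthickening δ A) y :=
  jacobian_integral_le_multN_on_thickening_general hsurf hloc f hf t ht k A hdens hJ
end

section
/- Let X be a metric space, x ∈ X, R > 0, and l ≥ 1 an integer; set M = 2^l. Let K ⊂ X be a connected set containing a point a with d(a,x) ≤ R and a point b with d(b,x) ≥ MR. Then ∫_{K ∩ (B(x,MR) ∖ B(x,R))} 1/(l · d(y,x)) dH¹(y) ≥ 1/2, where B(x,r) denotes the open ball, H¹ is the 1-dimensional Hausdorff measure on X, and the integral is a lower Lebesgue integral. -/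
/-!
Split the annulus `B(x, 2^l R) \ B(x, R)` into the `l` dyadic rings
`2^k R ≤ d(y, x) < 2^(k+1) R`. Since `K` is connected and joins the inner to the outer
boundary, the 1-Lipschitz map `y ↦ d(y, x)` sends `K ∩ ring` onto the whole interval
`[2^k R, 2^(k+1) R)`, so `H¹(K ∩ ring) ≥ 2^k R`. On that ring the integrand is at least
`1 / (l 2^(k+1) R)`, so each ring contributes at least `1 / (2l)`, and the `l` disjoint rings
together at least `1/2`.
-/

open MeasureTheory Metric Set
open scoped ENNReal NNReal

theorem ofReal_sub_le_hausdorffMeasure_inter_preimage_Ico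
    {X : Type*} [EMetricSpace X] [MeasurableSpace X] [BorelSpace X]
    {f : X → ℝ} {C : ℝ≥0} (hf : LipschitzWith C f) {K : Set X} (hK : IsPreconnected K)
    {a b : X} (ha : a ∈ K) (hb : b ∈ K) {s t : ℝ} (hs : f a ≤ s) (ht : t ≤ f b) :
    ENNReal.ofReal (t - s) ≤ C * μH[1] (K ∩ f ⁻¹' Ico s t) := by
  have hIco : Ico s t ⊆ f '' (K ∩ f ⁻¹' Ico s t) := by
    rw [image_inter_preimage]
    refine subset_inter (fun y hy => ?_) subset_rfl
    exact (hK.image f hf.continuous.continuousOn).Icc_subset (mem_image_of_mem f ha)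
      (mem_image_of_mem f hb) ⟨hs.trans hy.1, hy.2.le.trans ht⟩
  calc ENNReal.ofReal (t - s) = μH[1] (Ico s t) := by rw [hausdorffMeasure_real, Real.volume_Ico]
    _ ≤ μH[1] (f '' (K ∩ f ⁻¹' Ico s t)) := measure_mono hIco
    _ ≤ C * μH[1] (K ∩ f ⁻¹' Ico s t) := by
      simpa using hf.hausdorffMeasure_image_le zero_le_one (K ∩ f ⁻¹' Ico s t)

section DyadicShell

open Function

variable {X : Type*} [MetricSpace X]

def dyadicShell (x : X) (R : ℝ) (k : ℕ) : Set X :=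
  (dist · x) ⁻¹' Ico (2 ^ k * R) (2 ^ (k + 1) * R)

theorem measurableSet_dyadicShell [MeasurableSpace X] [OpensMeasurableSpace X]
    (x : X) (R : ℝ) (k : ℕ) : MeasurableSet (dyadicShell x R k) :=
  (continuous_id.dist continuous_const).measurable measurableSet_Ico

theorem pairwise_disjoint_dyadicShell (x : X) {R : ℝ} (hR : 0 ≤ R) :
    Pairwise (Disjoint on (dyadicShell x R)) := by
  have hmono : Monotone fun k : ℕ => (2 : ℝ) ^ k * R := fun i j hij =>
    mul_le_mul_of_nonneg_right (pow_le_pow_right₀ one_le_two hij) hR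
  exact fun i j hij => ((hmono.pairwise_disjoint_on_Ico_succ (α := ℕ) hij).preimage _ :)

theorem dyadicShell_subset_ball_diff_ball (x : X) {R : ℝ} (hR : 0 ≤ R) {k l : ℕ}
    (hk : k < l) : dyadicShell x R k ⊆ ball x (2 ^ l * R) \ ball x R := by
  intro y ⟨hy₁, hy₂⟩
  refine ⟨hy₂.trans_le ?_, fun hy => ?_⟩
  · exact mul_le_mul_of_nonneg_right (pow_le_pow_right₀ one_le_two hk) hR
  · have : R ≤ 2 ^ k * R := le_mul_of_one_le_left hR (one_le_pow₀ one_le_two)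
    exact (mem_ball.1 hy).not_ge (this.trans hy₁)

theorem ofReal_le_hausdorffMeasure_inter_dyadicShell [MeasurableSpace X] [BorelSpace X]
    {x : X} {R : ℝ} (hR : 0 ≤ R) {K : Set X} (hK : IsPreconnected K) {a b : X}
    (ha : a ∈ K) (had : dist a x ≤ R) (hb : b ∈ K) {k : ℕ}
    (hbd : 2 ^ (k + 1) * R ≤ dist b x) :
    ENNReal.ofReal (2 ^ k * R) ≤ μH[1] (K ∩ dyadicShell x R k) := by
  have h := ofReal_sub_le_hausdorffMeasure_inter_preimage_Ico (LipschitzWith.dist_left x) hK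
    ha hb (had.trans (le_mul_of_one_le_left hR (one_le_pow₀ (n := k) one_le_two))) hbd
  rw [ENNReal.coe_one, one_mul,
    show (2 : ℝ) ^ (k + 1) * R - 2 ^ k * R = 2 ^ k * R by ring] at h
  exact h

theorem ofReal_mul_le_setLIntegral_dyadicShell [MeasurableSpace X] [OpensMeasurableSpace X]
    (μ : Measure X) (x : X) {R c : ℝ} (hR : 0 < R) (hc : 0 < c) (k : ℕ) :
    ENNReal.ofReal (1 / (c * (2 ^ (k + 1) * R))) * μ (dyadicShell x R k) ≤
      ∫⁻ y in dyadicShell x R k, ENNReal.ofReal (1 / (c * dist y x)) ∂μ := by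
  rw [← setLIntegral_const]
  refine setLIntegral_mono' (measurableSet_dyadicShell x R k) fun y ⟨hy₁, hy₂⟩ => ?_
  have : 0 < dist y x := lt_of_lt_of_le (by positivity) hy₁
  gcongr

theorem ofReal_inv_two_mul_le_setLIntegral_dyadicShell [MeasurableSpace X] [BorelSpace X]
    {x : X} {R c : ℝ} (hR : 0 < R) (hc : 0 < c) {K S : Set X} (hK : IsPreconnected K)
    {a b : X} (ha : a ∈ K) (had : dist a x ≤ R) (hb : b ∈ K) {k : ℕ}
    (hbd : 2 ^ (k + 1) * R ≤ dist b x) (hKS : K ∩ dyadicShell x R k ⊆ S) :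
    ENNReal.ofReal (1 / (2 * c)) ≤
      ∫⁻ y in dyadicShell x R k, ENNReal.ofReal (1 / (c * dist y x)) ∂(μH[1].restrict S) := by
  calc ENNReal.ofReal (1 / (2 * c))
      = ENNReal.ofReal (1 / (c * (2 ^ (k + 1) * R))) * ENNReal.ofReal (2 ^ k * R) := by
        rw [← ENNReal.ofReal_mul (by positivity)]
        congr 1
        field_simp
        ring
    _ ≤ ENNReal.ofReal (1 / (c * (2 ^ (k + 1) * R))) * μH[1] (K ∩ dyadicShell x R k) := by
        gcongr
        exact ofReal_le_hausdorffMeasure_inter_dyadicShell hR.le hK ha had hb hbd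
    _ ≤ ENNReal.ofReal (1 / (c * (2 ^ (k + 1) * R))) * μH[1].restrict S (dyadicShell x R k) := by
        rw [Measure.restrict_apply (measurableSet_dyadicShell x R k)]
        exact mul_le_mul_right (measure_mono (subset_inter inter_subset_right hKS)) _
    _ ≤ _ := ofReal_mul_le_setLIntegral_dyadicShell _ x hR hc k

end DyadicShell

/-- Logarithmic annulus estimate: if a connected set `K` in a metric
space contains a point at distance at most `R` from `x` and a point at distance at least
`MR` from `x`, where `M = 2^l`, then
`∫_{K ∩ (B(x,MR) ∖ B(x,R))} 1/(l·d(y,x)) dH¹(y) ≥ 1/2`. -/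
theorem log_annulus_estimate
    {X : Type*} [MetricSpace X] [MeasurableSpace X] [BorelSpace X]
    (x : X) (R : ℝ) (hR : 0 < R) (l : ℕ) (hl : 1 ≤ l) (M : ℝ) (hM : M = 2 ^ l)
    (K : Set X) (hK : IsConnected K)
    (a : X) (ha : a ∈ K) (had : dist a x ≤ R)
    (b : X) (hb : b ∈ K) (hbd : M * R ≤ dist b x) :
    (2 : ℝ≥0∞)⁻¹ ≤
      ∫⁻ y in K ∩ (ball x (M * R) \ ball x R),
        ENNReal.ofReal (1 / (l * dist y x)) ∂(μH[1]) := by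
  subst hM
  set S := K ∩ (ball x (2 ^ l * R) \ ball x R)
  have hl₀ : (0 : ℝ) < l := by exact_mod_cast hl
  have hshell (k : ℕ) (hk : k ∈ Finset.range l) : ENNReal.ofReal (1 / (2 * l)) ≤
      ∫⁻ y in dyadicShell x R k, ENNReal.ofReal (1 / (l * dist y x)) ∂(μH[1].restrict S) := by
    have hk : k < l := Finset.mem_range.1 hk
    refine ofReal_inv_two_mul_le_setLIntegral_dyadicShell (S := S) hR hl₀ hK.isPreconnected
      ha had hb ?_ fun y hy => ⟨hy.1, dyadicShell_subset_ball_diff_ball x hR.le hk hy.2⟩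
    exact (mul_le_mul_of_nonneg_right (pow_le_pow_right₀ one_le_two hk) hR.le).trans hbd
  calc (2 : ℝ≥0∞)⁻¹ = ∑ _k ∈ Finset.range l, ENNReal.ofReal (1 / (2 * l)) := by
        rw [Finset.sum_const, Finset.card_range, nsmul_eq_mul, ← ENNReal.ofReal_natCast,
          ← ENNReal.ofReal_mul (by positivity), mul_one_div, div_mul_cancel_right₀ hl₀.ne',
          ENNReal.ofReal_inv_of_pos two_pos, ENNReal.ofReal_ofNat]
    _ ≤ ∑ k ∈ Finset.range l,
          ∫⁻ y in dyadicShell x R k, ENNReal.ofReal (1 / (l * dist y x)) ∂(μH[1].restrict S) :=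
        Finset.sum_le_sum hshell
    _ = ∫⁻ y in ⋃ k ∈ Finset.range l, dyadicShell x R k,
          ENNReal.ofReal (1 / (l * dist y x)) ∂(μH[1].restrict S) :=
        (lintegral_biUnion_finset ((pairwise_disjoint_dyadicShell x hR.le).set_pairwise _)
          (fun k _ => measurableSet_dyadicShell x R k) _).symm
    _ ≤ _ := setLIntegral_le_lintegral _ _
end

section
/- Let X be a metric space, μ a Borel measure on X, x ∈ X, R > 0, l ≥ 1 an integer, M = 2^l, and L ≥ 1. Let g : X → [0,∞] be a function such that (i) μ(B̄(x,r)) ≤ 4r² for every 0 < r ≤ 5MR, and (ii) ∫_{B(x,r)} g dμ ≤ L · μ(B(x,5r)) for every 0 < r ≤ MR. Then ∫_{B(x,MR) ∖ B(x,R)} g(y)/(l · d(y,x))² dμ(y) ≤ 400 L / l, where B(x,r) and B̄(x,r) denote the open and closed balls and the integrals are lower Lebesgue integrals. -/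
open MeasureTheory Metric Set Filter
open scoped ENNReal NNReal Topology

/-!
Cut the ring `B(x, 2ˡR) ∖ B(x, R)` into the `l` dyadic annuli `B(x, 2ᵏ⁺¹R) ∖ B(x, 2ᵏR)`. On the
`k`-th annulus the weight `(l·d(y,x))⁻²` is at most `(l·2ᵏR)⁻²`, while the maximal-function bound
and the density bound give `∫_{B(x, 2ᵏ⁺¹R)} g ≤ L · μ(B̄(x, 5·2ᵏ⁺¹R)) ≤ 400 L (2ᵏR)²`. Each annulus
therefore contributes at most `400 L / l²`, and the `l` annuli together at most `400 L / l`.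
-/

theorem diff_subset_biUnion_range_diff {α : Type*} (s : ℕ → Set α) (n : ℕ) :
    s n \ s 0 ⊆ ⋃ k ∈ Finset.range n, s (k + 1) \ s k := by
  induction n with
  | zero => simp
  | succ n ih =>
    rw [Finset.range_add_one, Finset.set_biUnion_insert]
    rintro y ⟨hy_succ, hy_zero⟩
    by_cases hy : y ∈ s n
    · exact Or.inr (ih ⟨hy, hy_zero⟩)
    · exact Or.inl ⟨hy_succ, hy⟩

section Lebesgue

variable {α : Type*} [MeasurableSpace α] {μ : Measure α}

theorem setLIntegral_biUnion_finset_le {ι : Type*} (s : Finset ι) (t : ι → Set α)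
    (f : α → ℝ≥0∞) : ∫⁻ a in ⋃ i ∈ s, t i, f a ∂μ ≤ ∑ i ∈ s, ∫⁻ a in t i, f a ∂μ := by
  classical
  induction s using Finset.induction_on with
  | empty => simp
  | insert i s hi ih =>
    rw [Finset.set_biUnion_insert, Finset.sum_insert hi]
    exact (lintegral_union_le _ _ _).trans (by gcongr)

theorem setLIntegral_div_le_of_le {s : Set α} (hs : MeasurableSet s) {f w : α → ℝ≥0∞}
    {c : ℝ≥0∞} (hc : c ≠ 0) (hcw : ∀ y ∈ s, c ≤ w y) :
    ∫⁻ y in s, f y / w y ∂μ ≤ (∫⁻ y in s, f y ∂μ) / c :=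
  calc ∫⁻ y in s, f y / w y ∂μ ≤ ∫⁻ y in s, f y * c⁻¹ ∂μ :=
        setLIntegral_mono' hs fun y hy => ENNReal.div_le_div_left (hcw y hy) _
    _ = (∫⁻ y in s, f y ∂μ) / c := lintegral_mul_const' _ _ (ENNReal.inv_ne_top.2 hc)

end Lebesgue

theorem ofReal_mul_div_ofReal_sq_eq (L : ℝ≥0∞) (l : ℕ) {r : ℝ} (hr : 0 < r) :
    L * ENNReal.ofReal (4 * (5 * (2 * r)) ^ 2) / ENNReal.ofReal ((l * r) ^ 2)
      = 400 * L / l / l := by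
  have hr2 : ENNReal.ofReal (r ^ 2) ≠ 0 := by positivity
  rw [show 4 * (5 * (2 * r)) ^ 2 = 400 * r ^ 2 by ring, mul_pow, ENNReal.ofReal_mul (by norm_num),
    ENNReal.ofReal_mul (by positivity), ENNReal.ofReal_pow (Nat.cast_nonneg _),
    ENNReal.ofReal_natCast, ENNReal.ofReal_ofNat, ← mul_assoc, mul_comm L,
    ENNReal.mul_div_mul_right _ _ hr2 ENNReal.ofReal_ne_top, pow_two]
  simp only [ENNReal.div_eq_inv_mul]
  rw [ENNReal.mul_inv (by simp) (by simp), mul_assoc]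

theorem setLIntegral_annulus_div_sq_le {X : Type*} [PseudoMetricSpace X] [MeasurableSpace X]
    [OpensMeasurableSpace X] {μ : Measure X} {x : X} {g : X → ℝ≥0∞} {L : ℝ≥0∞} {r : ℝ}
    (hr : 0 < r) {l : ℕ} (hl : l ≠ 0)
    (hmax : ∫⁻ y in ball x (2 * r), g y ∂μ ≤ L * μ (ball x (5 * (2 * r))))
    (hdensity : μ (closedBall x (5 * (2 * r))) ≤ ENNReal.ofReal (4 * (5 * (2 * r)) ^ 2)) :
    ∫⁻ y in ball x (2 * r) \ ball x r, g y / ENNReal.ofReal ((l * dist y x) ^ 2) ∂μ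
      ≤ 400 * L / l / l := by
  have hc : ENNReal.ofReal ((l * r) ^ 2) ≠ 0 := by positivity
  have hweight : ∀ y ∈ ball x (2 * r) \ ball x r,
      ENNReal.ofReal ((l * r) ^ 2) ≤ ENNReal.ofReal ((l * dist y x) ^ 2) := by
    rintro y ⟨-, hy⟩
    have : r ≤ dist y x := not_lt.1 hy
    gcongr
  calc ∫⁻ y in ball x (2 * r) \ ball x r, g y / ENNReal.ofReal ((l * dist y x) ^ 2) ∂μ
      ≤ (∫⁻ y in ball x (2 * r) \ ball x r, g y ∂μ) / ENNReal.ofReal ((l * r) ^ 2) :=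
        setLIntegral_div_le_of_le (measurableSet_ball.diff measurableSet_ball) hc hweight
    _ ≤ L * μ (ball x (5 * (2 * r))) / ENNReal.ofReal ((l * r) ^ 2) := by
        gcongr
        exact (lintegral_mono_set sdiff_subset).trans hmax
    _ ≤ L * ENNReal.ofReal (4 * (5 * (2 * r)) ^ 2) / ENNReal.ofReal ((l * r) ^ 2) := by
        gcongr
        exact (measure_mono ball_subset_closedBall).trans hdensity
    _ = 400 * L / l / l := ofReal_mul_div_ofReal_sq_eq L l hr

theorem dyadic_ring_estimate_general
    {X : Type*} [MetricSpace X] [MeasurableSpace X] [BorelSpace X]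
    (μ : Measure X) (x : X) (R : ℝ) (hR : 0 < R)
    (l : ℕ) (M : ℝ) (hM : M = 2 ^ l)
    (L : ℝ≥0∞) (g : X → ℝ≥0∞)
    (hdensity : ∀ r : ℝ, 0 < r → r ≤ 5 * M * R →
      μ (closedBall x r) ≤ ENNReal.ofReal (4 * r ^ 2))
    (hmax : ∀ r : ℝ, 0 < r → r ≤ M * R →
      ∫⁻ y in ball x r, g y ∂μ ≤ L * μ (ball x (5 * r))) :
    ∫⁻ y in ball x (M * R) \ ball x R,
        g y / ENNReal.ofReal ((l * dist y x) ^ 2) ∂μ ≤ 400 * L / l := by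
  subst hM
  have hcover := diff_subset_biUnion_range_diff (fun k => ball x (2 ^ k * R)) l
  simp only [pow_zero, one_mul, pow_succ', mul_assoc] at hcover
  have hannulus : ∀ k ∈ Finset.range l, ∫⁻ y in ball x (2 * (2 ^ k * R)) \ ball x (2 ^ k * R),
      g y / ENNReal.ofReal ((l * dist y x) ^ 2) ∂μ ≤ 400 * L / l / l := by
    intro k hk
    have hk := Finset.mem_range.1 hk
    have hr : 0 < 2 ^ k * R := by positivity
    have hrM : 2 * (2 ^ k * R) ≤ 2 ^ l * R := by
      rw [← mul_assoc, ← pow_succ']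
      gcongr
      exacts [one_le_two, hk]
    exact setLIntegral_annulus_div_sq_le hr (by omega) (hmax _ (by positivity) hrM)
      (hdensity _ (by positivity) (by linarith))
  calc _ ≤ ∑ k ∈ Finset.range l, ∫⁻ y in ball x (2 * (2 ^ k * R)) \ ball x (2 ^ k * R),
          g y / ENNReal.ofReal ((l * dist y x) ^ 2) ∂μ :=
        (lintegral_mono_set hcover).trans (setLIntegral_biUnion_finset_le _ _ _)
    _ ≤ ∑ _k ∈ Finset.range l, 400 * L / l / l := Finset.sum_le_sum hannulus
    _ ≤ 400 * L / l := by
        rw [Finset.sum_const, Finset.card_range, nsmul_eq_mul]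
        exact ENNReal.mul_div_le

/-- Dyadic-ring estimate: if `μ(B̄(x,r)) ≤ 4r²` for all `0 < r ≤ 5MR` and
the averages `∫_{B(x,r)} g dμ ≤ L · μ(B(x,5r))` for all `0 < r ≤ MR`, where `M = 2^l`, then
`∫_{B(x,MR) ∖ B(x,R)} g(y)/(l·d(y,x))² dμ(y) ≤ 400 L / l`. -/
theorem dyadic_ring_estimate
    {X : Type*} [MetricSpace X] [MeasurableSpace X] [BorelSpace X]
    (μ : Measure X) (x : X) (R : ℝ) (hR : 0 < R)
    (l : ℕ) (hl : 1 ≤ l) (M : ℝ) (hM : M = 2 ^ l)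
    (L : ℝ≥0∞) (hL : 1 ≤ L) (g : X → ℝ≥0∞)
    (hdensity : ∀ r : ℝ, 0 < r → r ≤ 5 * M * R →
      μ (closedBall x r) ≤ ENNReal.ofReal (4 * r ^ 2))
    (hmax : ∀ r : ℝ, 0 < r → r ≤ M * R →
      ∫⁻ y in ball x r, g y ∂μ ≤ L * μ (ball x (5 * r))) :
    ∫⁻ y in ball x (M * R) \ ball x R,
        g y / ENNReal.ofReal ((l * dist y x) ^ 2) ∂μ ≤ 400 * L / l :=
  dyadic_ring_estimate_general μ x R hR l M hM L g hdensity hmax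
end
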